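/- arXiv:2306.09691 — 2 statements merged into one kernel-verified Lean document; each statement's English description precedes it below -/
import Mathlib

section
/- There exists a universal constant C > 0 such that for all smooth compactly supported functions f, g, h : ℝ² → ℝ one has ∫_{ℝ²} |f g h| dx ≤ C · ‖f‖_{L²} · ‖g‖_{L²}^{1/2} · ‖∂₁g‖_{L²}^{1/2} · ‖h‖_{L²}^{1/2} · ‖∂₂h‖_{L²}^{1/2}. -/
open MeasureTheory intervalIntegral

noncomputable section

namespace AnisoIneq

/-- The partial derivative `∂₁` on `ℝ²`. -/
def D1 (f : ℝ × ℝ → ℝ) (x : ℝ × ℝ) : ℝ := fderiv ℝ f x (1, 0)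

/-- The partial derivative `∂₂` on `ℝ²`. -/
def D2 (f : ℝ × ℝ → ℝ) (x : ℝ × ℝ) : ℝ := fderiv ℝ f x (0, 1)

/-- The `L²(ℝ²)` norm. -/
def l2 (f : ℝ × ℝ → ℝ) : ℝ := Real.sqrt (∫ x : ℝ × ℝ, (f x) ^ 2)

/-- 1-D Agmon-type bound: `u(s)^2 ≤ ∫ 2|u u'|`. -/
lemma one_dim_sq_le {u : ℝ → ℝ} (hu : ContDiff ℝ (⊤ : ℕ∞) u) (hcu : HasCompactSupport u) (s : ℝ) :
    u s ^ 2 ≤ ∫ t, 2 * |u t * deriv u t| := by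
  have hud : Differentiable ℝ u := hu.differentiable (by simp)
  have hu' : Continuous (deriv u) := hu.continuous_deriv (by simp)
  have hΦc : Continuous fun t => 2 * |u t * deriv u t| :=
    (continuous_const.mul ((hu.continuous.mul hu').abs))
  have hΦs : HasCompactSupport fun t => 2 * |u t * deriv u t| := by
    have hsub : Function.support (fun t => 2 * |u t * deriv u t|) ⊆ Function.support u := by
      intro t ht
      simp only [Function.mem_support, ne_eq] at ht ⊢
      intro h0
      exact ht (by simp [h0])
    exact hcu.mono' (hsub.trans (subset_tsupport u))
  have hΦi : Integrable (fun t => 2 * |u t * deriv u t|) := hΦc.integrable_of_hasCompactSupport hΦs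
  obtain ⟨R, hR⟩ := hcu.isBounded.subset_closedBall 0
  set a : ℝ := min s (-(|R| + 1)) with ha
  have has : a ≤ s := min_le_left _ _
  have hua : u a = 0 := by
    apply image_eq_zero_of_notMem_tsupport
    intro hmem
    have h3 := hR hmem
    simp only [Metric.mem_closedBall, Real.dist_eq, sub_zero, abs_le] at h3
    have h1 : a ≤ -(|R| + 1) := min_le_right _ _
    nlinarith [le_abs_self R]
  have key : ∫ t in a..s, 2 * u t * deriv u t = u s ^ 2 := by
    have := integral_deriv_eq_sub' (f := fun t => u t ^ 2)
      (f' := fun t => 2 * u t * deriv u t) (a := a) (b := s)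
      (by
        funext t
        have := ((hud t).hasDerivAt.pow 2).deriv
        rw [show (fun t => u t ^ 2) = u ^ 2 from rfl, this]; norm_num)
      (fun x _ => (hud x).pow 2)
      (((continuous_const.mul hu.continuous).mul hu').continuousOn)
    rw [this, hua]
    ring
  calc u s ^ 2 = ∫ t in a..s, 2 * u t * deriv u t := key.symm
    _ ≤ ∫ t in a..s, 2 * |u t * deriv u t| := by
        apply integral_mono_on has
        · exact (((continuous_const.mul hu.continuous).mul hu')).intervalIntegrable a s
        · exact hΦc.intervalIntegrable a s
        · intro x _
          rw [mul_assoc]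
          exact mul_le_mul_of_nonneg_left (le_abs_self _) (by norm_num)
    _ = ∫ t in Set.Ioc a s, 2 * |u t * deriv u t| := integral_of_le has
    _ ≤ ∫ t, 2 * |u t * deriv u t| := by
        apply setIntegral_le_integral hΦi
        filter_upwards with t
        positivity

lemma slice1 {g : ℝ × ℝ → ℝ} (hg : ContDiff ℝ (⊤ : ℕ∞) g) (hcg : HasCompactSupport g) (x : ℝ × ℝ) :
    g x ^ 2 ≤ ∫ t, 2 * |g (t, x.2) * D1 g (t, x.2)| := by
  set u : ℝ → ℝ := fun t => g (t, x.2) with hu_def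
  have hmap : ContDiff ℝ (⊤ : ℕ∞) (fun t : ℝ => (t, x.2)) := contDiff_id.prodMk contDiff_const
  have hu : ContDiff ℝ (⊤ : ℕ∞) u := hg.comp hmap
  have hcu : HasCompactSupport u := by
    apply HasCompactSupport.intro (hcg.isCompact.image continuous_fst)
    intro t ht
    by_contra h0
    exact ht ⟨(t, x.2), subset_tsupport g (Function.mem_support.2 h0), rfl⟩
  have hderiv : ∀ t, deriv u t = D1 g (t, x.2) := by
    intro t
    have h1 : HasDerivAt (fun t : ℝ => (t, x.2)) ((1 : ℝ), (0 : ℝ)) t :=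
      (hasDerivAt_id t).prodMk (hasDerivAt_const t x.2)
    have h2 : HasDerivAt u (fderiv ℝ g (t, x.2) (1, 0)) t :=
      ((hg.differentiable (by simp)) (t, x.2)).hasFDerivAt.comp_hasDerivAt t h1
    exact h2.deriv
  have := one_dim_sq_le hu hcu x.1
  calc g x ^ 2 = u x.1 ^ 2 := by simp [hu_def]
    _ ≤ ∫ t, 2 * |u t * deriv u t| := this
    _ = ∫ t, 2 * |g (t, x.2) * D1 g (t, x.2)| := by
        congr 1
        funext t
        rw [hderiv t]

lemma slice2 {h : ℝ × ℝ → ℝ} (hh : ContDiff ℝ (⊤ : ℕ∞) h) (hch : HasCompactSupport h) (x : ℝ × ℝ) :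
    h x ^ 2 ≤ ∫ t, 2 * |h (x.1, t) * D2 h (x.1, t)| := by
  set u : ℝ → ℝ := fun t => h (x.1, t) with hu_def
  have hmap : ContDiff ℝ (⊤ : ℕ∞) (fun t : ℝ => (x.1, t)) := contDiff_const.prodMk contDiff_id
  have hu : ContDiff ℝ (⊤ : ℕ∞) u := hh.comp hmap
  have hcu : HasCompactSupport u := by
    apply HasCompactSupport.intro (hch.isCompact.image continuous_snd)
    intro t ht
    by_contra h0
    exact ht ⟨(x.1, t), subset_tsupport h (Function.mem_support.2 h0), rfl⟩
  have hderiv : ∀ t, deriv u t = D2 h (x.1, t) := by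
    intro t
    have h1 : HasDerivAt (fun t : ℝ => (x.1, t)) ((0 : ℝ), (1 : ℝ)) t :=
      (hasDerivAt_const t x.1).prodMk (hasDerivAt_id t)
    have h2 : HasDerivAt u (fderiv ℝ h (x.1, t) (0, 1)) t :=
      ((hh.differentiable (by simp)) (x.1, t)).hasFDerivAt.comp_hasDerivAt t h1
    exact h2.deriv
  have := one_dim_sq_le hu hcu x.2
  calc h x ^ 2 = u x.2 ^ 2 := by simp [hu_def]
    _ ≤ ∫ t, 2 * |u t * deriv u t| := this
    _ = ∫ t, 2 * |h (x.1, t) * D2 h (x.1, t)| := by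
        congr 1
        funext t
        rw [hderiv t]

/-- Cauchy–Schwarz for continuous compactly supported functions on `ℝ²`. -/
lemma cs {u v : ℝ × ℝ → ℝ} (hu : Continuous u) (hcu : HasCompactSupport u)
    (hv : Continuous v) (hcv : HasCompactSupport v) :
    ∫ x, |u x * v x| ≤ l2 u * l2 v := by
  have hpq : Real.HolderConjugate 2 2 := Real.HolderConjugate.two_two
  have hmu : MemLp u (ENNReal.ofReal 2) := hu.memLp_of_hasCompactSupport hcu
  have hmv : MemLp v (ENNReal.ofReal 2) := hv.memLp_of_hasCompactSupport hcv
  have H := integral_mul_norm_le_Lp_mul_Lq hpq hmu hmv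
  have e1 : ∀ w : ℝ × ℝ → ℝ, ∫ a, ‖w a‖ ^ (2 : ℝ) = ∫ a : ℝ × ℝ, w a ^ 2 := by
    intro w
    congr 1
    funext a
    rw [show ((2 : ℝ) = ((2 : ℕ) : ℝ)) by norm_num, Real.rpow_natCast]
    simp [Real.norm_eq_abs, sq_abs]
  rw [e1 u, e1 v] at H
  have e2 : ∀ w : ℝ × ℝ → ℝ, (∫ a : ℝ × ℝ, w a ^ 2) ^ ((1 : ℝ)/2) = l2 w := by
    intro w
    rw [l2, Real.sqrt_eq_rpow]
  rw [e2 u, e2 v] at H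
  calc ∫ x, |u x * v x| = ∫ x, ‖u x‖ * ‖v x‖ := by
        congr 1; funext x; rw [Real.norm_eq_abs, Real.norm_eq_abs, abs_mul]
    _ ≤ l2 u * l2 v := H

lemma l2_nonneg (f : ℝ × ℝ → ℝ) : 0 ≤ l2 f := Real.sqrt_nonneg _

lemma hcs_mul_left {w u : ℝ × ℝ → ℝ} (hcu : HasCompactSupport u)
    (hw : ∀ x, u x = 0 → w x = 0) : HasCompactSupport w := by
  have hsub : Function.support w ⊆ Function.support u := by
    intro x hx
    simp only [Function.mem_support, ne_eq] at hx ⊢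
    intro h0
    exact hx (hw x h0)
  exact hcu.mono' (hsub.trans (subset_tsupport u))

/-- the anisotropic trilinear estimate
`∫ |f g h| ≤ C ‖f‖_{L²} ‖g‖_{L²}^{1/2} ‖∂₁g‖_{L²}^{1/2} ‖h‖_{L²}^{1/2} ‖∂₂h‖_{L²}^{1/2}`. -/
theorem anisotropic_trilinear_estimate :
    ∃ C : ℝ, 0 < C ∧
      ∀ f g h : ℝ × ℝ → ℝ,
        ContDiff ℝ (⊤ : ℕ∞) f → HasCompactSupport f →
        ContDiff ℝ (⊤ : ℕ∞) g → HasCompactSupport g →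
        ContDiff ℝ (⊤ : ℕ∞) h → HasCompactSupport h →
        (∫ x : ℝ × ℝ, |f x * g x * h x|)
          ≤ C * l2 f * Real.sqrt (l2 g) * Real.sqrt (l2 (D1 g))
              * Real.sqrt (l2 h) * Real.sqrt (l2 (D2 h)) := by
  refine ⟨2, two_pos, fun f g h hf hcf hg hcg hh hch => ?_⟩
  -- continuity facts
  have hgc : Continuous g := hg.continuous
  have hhc : Continuous h := hh.continuous
  have hD1c : Continuous (D1 g) := (hg.continuous_fderiv (by simp)).clm_apply continuous_const
  have hD2c : Continuous (D2 h) := (hh.continuous_fderiv (by simp)).clm_apply continuous_const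
  have hcD1 : HasCompactSupport (D1 g) := hcg.fderiv_apply ℝ (1, 0)
  have hcD2 : HasCompactSupport (D2 h) := hch.fderiv_apply ℝ (0, 1)
  -- the two auxiliary integrands
  set Φ : ℝ × ℝ → ℝ := fun x => 2 * |g x * D1 g x| with hΦ_def
  set Ψ : ℝ × ℝ → ℝ := fun x => 2 * |h x * D2 h x| with hΨ_def
  have hΦc : Continuous Φ := continuous_const.mul ((hgc.mul hD1c).abs)
  have hΨc : Continuous Ψ := continuous_const.mul ((hhc.mul hD2c).abs)
  have hΦs : HasCompactSupport Φ := hcs_mul_left hcg (fun x h0 => by simp [hΦ_def, h0])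
  have hΨs : HasCompactSupport Ψ := hcs_mul_left hch (fun x h0 => by simp [hΨ_def, h0])
  have hΦi : Integrable Φ := hΦc.integrable_of_hasCompactSupport hΦs
  have hΨi : Integrable Ψ := hΨc.integrable_of_hasCompactSupport hΨs
  have hΦP : Integrable Φ ((volume : Measure ℝ).prod volume) := by
    rwa [← Measure.volume_eq_prod]
  have hΨP : Integrable Ψ ((volume : Measure ℝ).prod volume) := by
    rwa [← Measure.volume_eq_prod]
  set G : ℝ → ℝ := fun b => ∫ t, Φ (t, b) with hG_def
  set H : ℝ → ℝ := fun a => ∫ t, Ψ (a, t) with hH_def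
  have hGint : Integrable G := hΦP.integral_prod_right
  have hHint : Integrable H := hΨP.integral_prod_left
  have hGnn : ∀ b, 0 ≤ G b := fun b => integral_nonneg (fun t => by positivity)
  have hHnn : ∀ a, 0 ≤ H a := fun a => integral_nonneg (fun t => by positivity)
  -- pointwise bound
  have hpt : ∀ x : ℝ × ℝ, (g x * h x) ^ 2 ≤ H x.1 * G x.2 := by
    intro x
    have h1 : g x ^ 2 ≤ G x.2 := slice1 hg hcg x
    have h2 : h x ^ 2 ≤ H x.1 := slice2 hh hch x
    calc (g x * h x) ^ 2 = h x ^ 2 * g x ^ 2 := by ring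
      _ ≤ H x.1 * G x.2 := mul_le_mul h2 h1 (sq_nonneg _) (hHnn _)
  -- integrate the pointwise bound
  have hghsq_c : Continuous fun x => (g x * h x) ^ 2 := (hgc.mul hhc).pow 2
  have hghsq_s : HasCompactSupport fun x => (g x * h x) ^ 2 :=
    hcs_mul_left hcg (fun x h0 => by simp [h0])
  have hghsq_i : Integrable (fun x => (g x * h x) ^ 2) :=
    hghsq_c.integrable_of_hasCompactSupport hghsq_s
  have hHGi : Integrable (fun x : ℝ × ℝ => H x.1 * G x.2) := by
    rw [Measure.volume_eq_prod]
    exact hHint.mul_prod hGint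
  have step2 : (∫ x : ℝ × ℝ, (g x * h x) ^ 2) ≤ (∫ a, H a) * ∫ b, G b := by
    calc (∫ x : ℝ × ℝ, (g x * h x) ^ 2) ≤ ∫ x : ℝ × ℝ, H x.1 * G x.2 :=
          integral_mono hghsq_i hHGi hpt
      _ = (∫ a, H a) * ∫ b, G b := by
          rw [Measure.volume_eq_prod]
          exact integral_prod_mul H G
  -- identify ∫ G and ∫ H with integrals over ℝ²
  have hGval : (∫ b, G b) = ∫ x : ℝ × ℝ, Φ x := by
    rw [hG_def, Measure.volume_eq_prod (α := ℝ) (β := ℝ)]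
    exact (integral_prod_symm Φ hΦP).symm
  have hHval : (∫ a, H a) = ∫ x : ℝ × ℝ, Ψ x := by
    rw [hH_def, Measure.volume_eq_prod (α := ℝ) (β := ℝ)]
    exact (integral_prod Ψ hΨP).symm
  -- Cauchy–Schwarz on the two factors
  have hGbd : (∫ b, G b) ≤ 2 * (l2 g * l2 (D1 g)) := by
    rw [hGval]
    have : (∫ x : ℝ × ℝ, Φ x) = 2 * ∫ x : ℝ × ℝ, |g x * D1 g x| := by
      rw [hΦ_def, MeasureTheory.integral_const_mul]
    rw [this]
    exact mul_le_mul_of_nonneg_left (cs hgc hcg hD1c hcD1) (by norm_num)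
  have hHbd : (∫ a, H a) ≤ 2 * (l2 h * l2 (D2 h)) := by
    rw [hHval]
    have : (∫ x : ℝ × ℝ, Ψ x) = 2 * ∫ x : ℝ × ℝ, |h x * D2 h x| := by
      rw [hΨ_def, MeasureTheory.integral_const_mul]
    rw [this]
    exact mul_le_mul_of_nonneg_left (cs hhc hch hD2c hcD2) (by norm_num)
  -- combine
  have hGint_nn : 0 ≤ ∫ b, G b := integral_nonneg hGnn
  have hSbd : (∫ x : ℝ × ℝ, (g x * h x) ^ 2)
      ≤ (2 * (l2 h * l2 (D2 h))) * (2 * (l2 g * l2 (D1 g))) := by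
    refine step2.trans ?_
    exact mul_le_mul hHbd hGbd hGint_nn (mul_nonneg (by norm_num) (mul_nonneg (l2_nonneg h) (l2_nonneg (D2 h))))
  have hE : Real.sqrt ((2 * (l2 h * l2 (D2 h))) * (2 * (l2 g * l2 (D1 g))))
      = 2 * Real.sqrt (l2 g) * Real.sqrt (l2 (D1 g)) * Real.sqrt (l2 h) * Real.sqrt (l2 (D2 h)) := by
    have e : (2 * (l2 h * l2 (D2 h))) * (2 * (l2 g * l2 (D1 g)))
        = (2 * Real.sqrt (l2 g) * Real.sqrt (l2 (D1 g)) * Real.sqrt (l2 h)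
            * Real.sqrt (l2 (D2 h))) ^ 2 := by
      have s1 := Real.sq_sqrt (l2_nonneg g)
      have s2 := Real.sq_sqrt (l2_nonneg (D1 g))
      have s3 := Real.sq_sqrt (l2_nonneg h)
      have s4 := Real.sq_sqrt (l2_nonneg (D2 h))
      rw [mul_pow, mul_pow, mul_pow, mul_pow, s1, s2, s3, s4]; ring
    rw [e, Real.sqrt_sq (by positivity)]
  -- first Cauchy–Schwarz
  have step1 : (∫ x : ℝ × ℝ, |f x * g x * h x|) ≤ l2 f * l2 (fun x => g x * h x) := by
    have : (∫ x : ℝ × ℝ, |f x * g x * h x|) = ∫ x : ℝ × ℝ, |f x * (g x * h x)| := by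
      congr 1; funext x; rw [mul_assoc]
    rw [this]
    exact cs hf.continuous hcf (hgc.mul hhc)
      (hcs_mul_left hcg (fun x h0 => by simp [h0]))
  have hl2gh : l2 (fun x => g x * h x)
      ≤ 2 * Real.sqrt (l2 g) * Real.sqrt (l2 (D1 g)) * Real.sqrt (l2 h)
          * Real.sqrt (l2 (D2 h)) := by
    rw [l2, ← hE]
    exact Real.sqrt_le_sqrt hSbd
  calc (∫ x : ℝ × ℝ, |f x * g x * h x|) ≤ l2 f * l2 (fun x => g x * h x) := step1
    _ ≤ l2 f * (2 * Real.sqrt (l2 g) * Real.sqrt (l2 (D1 g)) * Real.sqrt (l2 h)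
          * Real.sqrt (l2 (D2 h))) := mul_le_mul_of_nonneg_left hl2gh (l2_nonneg f)
    _ = 2 * l2 f * Real.sqrt (l2 g) * Real.sqrt (l2 (D1 g)) * Real.sqrt (l2 h)
          * Real.sqrt (l2 (D2 h)) := by ring

end AnisoIneq
end
end

section
/- There exists a universal constant C > 0 such that for every smooth compactly supported function f : ℝ² → ℝ one has ‖f‖_{L^∞} ≤ C ( ‖f‖_{L²}^{1/2} ‖∂₁f‖_{L²}^{1/2} + ‖∂₂f‖_{L²}^{1/2} ‖∂₁₂f‖_{L²}^{1/2} ). -/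
open MeasureTheory

noncomputable section

namespace AnisoIneq

/-! ### Auxiliary lemmas -/

/-- Cauchy–Schwarz for integrals. -/
lemma cs_s1 {α : Type*} [MeasurableSpace α] {μ : Measure α} {f g : α → ℝ}
    (hf : MemLp f 2 μ) (hg : MemLp g 2 μ) :
    ∫ a, |f a| * |g a| ∂μ ≤ Real.sqrt (∫ a, f a ^ 2 ∂μ) * Real.sqrt (∫ a, g a ^ 2 ∂μ) := by
  have hpq : (2:ℝ).HolderConjugate 2 := ⟨by norm_num, by norm_num, by norm_num⟩
  have h2 : ENNReal.ofReal (2:ℝ) = 2 := by simp [ENNReal.ofReal_ofNat]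
  have := integral_mul_le_Lp_mul_Lq_of_nonneg hpq
    (f := fun a => |f a|) (g := fun a => |g a|)
    (Filter.Eventually.of_forall fun a => abs_nonneg _)
    (Filter.Eventually.of_forall fun a => abs_nonneg _)
    (h2 ▸ hf.abs) (h2 ▸ hg.abs)
  calc ∫ a, |f a| * |g a| ∂μ
      ≤ (∫ a, |f a| ^ (2:ℝ) ∂μ) ^ (1/(2:ℝ)) * (∫ a, |g a| ^ (2:ℝ) ∂μ) ^ (1/(2:ℝ)) := this
    _ = Real.sqrt (∫ a, f a ^ 2 ∂μ) * Real.sqrt (∫ a, g a ^ 2 ∂μ) := by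
        have e1 : ∀ (h : α → ℝ), (fun a => |h a| ^ (2:ℝ)) = fun a => h a ^ 2 := by
          intro h; funext a
          rw [show (2:ℝ) = ((2:ℕ):ℝ) by norm_num, Real.rpow_natCast, sq_abs]
        rw [e1 f, e1 g, Real.sqrt_eq_rpow, Real.sqrt_eq_rpow]

/-- The 1D Agmon-type estimate: `g(t)² ≤ 2 ∫ |g| |g'|`. -/
lemma oneD {g : ℝ → ℝ} (hg : ContDiff ℝ (⊤ : ℕ∞) g) (hs : HasCompactSupport g) (t : ℝ) :
    g t ^ 2 ≤ 2 * ∫ s, |g s| * |deriv g s| := by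
  have hgc : Continuous g := hg.continuous
  have hgd : Continuous (deriv g) := hg.continuous_deriv (by simp)
  have hprod : Continuous fun s => |g s| * |deriv g s| := (hgc.abs.mul hgd.abs)
  have hsupp : HasCompactSupport fun s => |g s| * |deriv g s| := by
    apply HasCompactSupport.mul_right
    exact hs.abs
  have hint : Integrable (fun s => |g s| * |deriv g s|) :=
    hprod.integrable_of_hasCompactSupport hsupp
  obtain ⟨R, hR⟩ := hs.isBounded.subset_closedBall 0
  set a : ℝ := min t (-R) - 1 with ha
  have hat : a ≤ t := by
    have : min t (-R) ≤ t := min_le_left _ _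
    linarith
  have hga : g a = 0 := by
    apply image_eq_zero_of_notMem_tsupport
    intro hmem
    have := hR hmem
    rw [Metric.mem_closedBall, Real.dist_eq, sub_zero] at this
    have h1 : min t (-R) ≤ -R := min_le_right _ _
    have h2 : -R ≤ a := neg_le_of_abs_le this
    simp only [ha] at h2
    linarith
  have hderiv : ∀ s ∈ Set.uIcc a t, HasDerivAt (fun s => g s ^ 2) (2 * g s * deriv g s) s := by
    intro s _
    have h1 : HasDerivAt g (deriv g s) s :=
      (hg.differentiable (by simp) s).hasDerivAt
    have := h1.fun_pow 2
    simpa [mul_comm, mul_assoc, mul_left_comm] using this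
  have hcont2 : Continuous fun s => 2 * g s * deriv g s :=
    (continuous_const.mul hgc).mul hgd
  have hftc : ∫ s in a..t, 2 * g s * deriv g s = g t ^ 2 - g a ^ 2 :=
    intervalIntegral.integral_eq_sub_of_hasDerivAt hderiv (hcont2.intervalIntegrable a t)
  have key : g t ^ 2 = ∫ s in a..t, 2 * g s * deriv g s := by
    rw [hftc, hga]; ring
  rw [key]
  have step1 : ∫ s in a..t, 2 * g s * deriv g s ≤ ∫ s in a..t, 2 * (|g s| * |deriv g s|) := by
    apply intervalIntegral.integral_mono_on hat
    · exact hcont2.intervalIntegrable a t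
    · exact ((continuous_const.mul hprod)).intervalIntegrable a t
    · intro s _
      calc 2 * g s * deriv g s ≤ |2 * g s * deriv g s| := le_abs_self _
        _ = 2 * (|g s| * |deriv g s|) := by rw [abs_mul, abs_mul, abs_two]; ring
  refine step1.trans ?_
  rw [intervalIntegral.integral_of_le hat]
  rw [← integral_const_mul]
  apply setIntegral_le_integral (hint.const_mul 2)
  exact Filter.Eventually.of_forall fun s => by positivity

variable {f : ℝ × ℝ → ℝ}

lemma slice1_contDiff (hf : ContDiff ℝ (⊤ : ℕ∞) f) (b : ℝ) :
    ContDiff ℝ (⊤ : ℕ∞) fun t => f (t, b) :=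
  hf.comp (contDiff_id.prodMk contDiff_const)

lemma slice2_contDiff (hf : ContDiff ℝ (⊤ : ℕ∞) f) (a : ℝ) :
    ContDiff ℝ (⊤ : ℕ∞) fun s => f (a, s) :=
  hf.comp (contDiff_const.prodMk contDiff_id)

lemma slice1_supp (hs : HasCompactSupport f) (b : ℝ) :
    HasCompactSupport fun t => f (t, b) := by
  have hK : IsCompact (Prod.fst '' tsupport f) := hs.image continuous_fst
  apply IsCompact.of_isClosed_subset hK (isClosed_tsupport _)
  apply closure_minimal _ hK.isClosed
  intro t ht
  exact ⟨(t, b), subset_tsupport f ht, rfl⟩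

lemma slice2_supp (hs : HasCompactSupport f) (a : ℝ) :
    HasCompactSupport fun s => f (a, s) := by
  have hK : IsCompact (Prod.snd '' tsupport f) := hs.image continuous_snd
  apply IsCompact.of_isClosed_subset hK (isClosed_tsupport _)
  apply closure_minimal _ hK.isClosed
  intro s hsmem
  exact ⟨(a, s), subset_tsupport f hsmem, rfl⟩

lemma slice1_deriv (hf : ContDiff ℝ (⊤ : ℕ∞) f) (b t : ℝ) :
    deriv (fun t => f (t, b)) t = D1 f (t, b) := by
  have h1 : HasDerivAt (fun t : ℝ => (t, b)) ((1:ℝ), (0:ℝ)) t :=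
    (hasDerivAt_id t).prodMk (hasDerivAt_const t b)
  have h2 : HasDerivAt (fun t => f (t, b)) (fderiv ℝ f (t, b) (1, 0)) t :=
    (hf.differentiable (by simp) (t, b)).hasFDerivAt.comp_hasDerivAt t h1
  exact h2.deriv

lemma slice2_deriv (hf : ContDiff ℝ (⊤ : ℕ∞) f) (a s : ℝ) :
    deriv (fun s => f (a, s)) s = D2 f (a, s) := by
  have h1 : HasDerivAt (fun s : ℝ => (a, s)) ((0:ℝ), (1:ℝ)) s :=
    (hasDerivAt_const s a).prodMk (hasDerivAt_id s)
  have h2 : HasDerivAt (fun s => f (a, s)) (fderiv ℝ f (a, s) (0, 1)) s :=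
    (hf.differentiable (by simp) (a, s)).hasFDerivAt.comp_hasDerivAt s h1
  exact h2.deriv

lemma D_contDiff (hf : ContDiff ℝ (⊤ : ℕ∞) f) (v : ℝ × ℝ) :
    ContDiff ℝ (⊤ : ℕ∞) fun x => fderiv ℝ f x v :=
  (hf.fderiv_right ((by simp))).clm_apply contDiff_const

lemma D_supp (hs : HasCompactSupport f) (v : ℝ × ℝ) :
    HasCompactSupport fun x => fderiv ℝ f x v :=
  hs.fderiv_apply ℝ v

/-- Symmetry of mixed second partial derivatives. -/
lemma d12_symm (hf : ContDiff ℝ (⊤ : ℕ∞) f) : D1 (D2 f) = D2 (D1 f) := by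
  funext x
  have hdd : ContDiff ℝ (⊤ : ℕ∞) fun y => fderiv ℝ f y := hf.fderiv_right (by simp)
  have hda : DifferentiableAt ℝ (fun y => fderiv ℝ f y) x :=
    (hdd.differentiable (by simp) x)
  have e : ∀ v w : ℝ × ℝ, fderiv ℝ (fun y => fderiv ℝ f y v) x w
      = fderiv ℝ (fderiv ℝ f) x w v := by
    intro v w
    rw [fderiv_clm_apply hda (differentiableAt_const v)]
    simp
  have hsymm : IsSymmSndFDerivAt ℝ f x :=
    (hf.contDiffAt).isSymmSndFDerivAt (by rw [minSmoothness_of_isRCLikeNormedField]; exact WithTop.coe_le_coe.mpr le_top)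
  show fderiv ℝ (fun y => fderiv ℝ f y (0,1)) x (1,0)
      = fderiv ℝ (fun y => fderiv ℝ f y (1,0)) x (0,1)
  rw [e, e]
  exact hsymm.eq _ _

/-- Bound on the `L²` norm of a horizontal slice. -/
lemma slice_bound (hf : ContDiff ℝ (⊤ : ℕ∞) f) (hs : HasCompactSupport f) (q : ℝ) :
    ∫ t, f (t, q) ^ 2 ≤
      2 * (Real.sqrt (∫ x : ℝ × ℝ, f x ^ 2) * Real.sqrt (∫ x : ℝ × ℝ, D2 f x ^ 2)) := by
  have hD2c : Continuous (D2 f) := (D_contDiff hf (0,1)).continuous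
  set F : ℝ × ℝ → ℝ := fun z => |f z| * |D2 f z| with hF
  have hFc : Continuous F := hf.continuous.abs.mul hD2c.abs
  have hFs : HasCompactSupport F := (hs.abs).mul_right
  have hFi : Integrable F := hFc.integrable_of_hasCompactSupport hFs
  have hFi' : Integrable F (volume.prod volume) := by
    rwa [← MeasureTheory.Measure.volume_eq_prod ℝ ℝ]
  have hpt : ∀ t : ℝ, f (t, q) ^ 2 ≤ 2 * ∫ s, F (t, s) := by
    intro t
    have h := oneD (slice2_contDiff hf t) (slice2_supp hs t) q
    calc f (t, q) ^ 2 ≤ 2 * ∫ s, |f (t, s)| * |deriv (fun s => f (t, s)) s| := h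
      _ = 2 * ∫ s, F (t, s) := by
          congr 1
          apply integral_congr_ae
          filter_upwards with s
          rw [slice2_deriv hf]
  have hLc : Continuous fun t => f (t, q) ^ 2 :=
    (hf.continuous.comp (continuous_id.prodMk continuous_const)).pow 2
  have hLs : HasCompactSupport fun t => f (t, q) ^ 2 := by
    have := (slice1_supp hs q).comp_left (g := fun y : ℝ => y ^ 2) (by simp)
    exact this
  have hLi : Integrable fun t => f (t, q) ^ 2 := hLc.integrable_of_hasCompactSupport hLs
  have hRi : Integrable fun t => 2 * ∫ s, F (t, s) := (hFi'.integral_prod_left).const_mul 2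
  calc ∫ t, f (t, q) ^ 2 ≤ ∫ t, 2 * ∫ s, F (t, s) := integral_mono hLi hRi hpt
    _ = 2 * ∫ t, ∫ s, F (t, s) := integral_const_mul 2 _
    _ = 2 * ∫ z : ℝ × ℝ, F z := by
        rw [MeasureTheory.integral_integral hFi', ← MeasureTheory.Measure.volume_eq_prod ℝ ℝ]
    _ ≤ 2 * (Real.sqrt (∫ x : ℝ × ℝ, f x ^ 2) * Real.sqrt (∫ x : ℝ × ℝ, D2 f x ^ 2)) := by
        apply mul_le_mul_of_nonneg_left _ (by norm_num)
        exact cs_s1 (hf.continuous.memLp_of_hasCompactSupport hs)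
          (hD2c.memLp_of_hasCompactSupport (D_supp hs (0,1)))

/-- the anisotropic Sobolev inequality
`‖f‖_{L^∞} ≤ C (‖f‖_{L²}^{1/2} ‖∂₁f‖_{L²}^{1/2} + ‖∂₂f‖_{L²}^{1/2} ‖∂₁₂f‖_{L²}^{1/2})`. -/
theorem anisotropic_sup_estimate :
    ∃ C : ℝ, 0 < C ∧
      ∀ f : ℝ × ℝ → ℝ, ContDiff ℝ (⊤ : ℕ∞) f → HasCompactSupport f →
        ∀ x : ℝ × ℝ,
          |f x| ≤ C * (Real.sqrt (l2 f) * Real.sqrt (l2 (D1 f))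
            + Real.sqrt (l2 (D2 f)) * Real.sqrt (l2 (D1 (D2 f)))) := by
  refine ⟨2, by norm_num, ?_⟩
  intro f hf hs x
  obtain ⟨p, q⟩ := x
  set u : ℝ := Real.sqrt (l2 f) * Real.sqrt (l2 (D1 f)) with hu
  set v : ℝ := Real.sqrt (l2 (D2 f)) * Real.sqrt (l2 (D1 (D2 f))) with hv
  have hu0 : 0 ≤ u := mul_nonneg (Real.sqrt_nonneg _) (Real.sqrt_nonneg _)
  have hv0 : 0 ≤ v := mul_nonneg (Real.sqrt_nonneg _) (Real.sqrt_nonneg _)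
  set A : ℝ := ∫ t, f (t, q) ^ 2 with hA
  set B : ℝ := ∫ t, D1 f (t, q) ^ 2 with hB
  have hA0 : 0 ≤ A := integral_nonneg fun t => sq_nonneg _
  have hB0 : 0 ≤ B := integral_nonneg fun t => sq_nonneg _
  have hD1c : ContDiff ℝ (⊤ : ℕ∞) (D1 f) := D_contDiff hf (1, 0)
  have hD1s : HasCompactSupport (D1 f) := D_supp hs (1, 0)
  have stepA : f (p, q) ^ 2 ≤ 2 * (Real.sqrt A * Real.sqrt B) := by
    have h := oneD (slice1_contDiff hf q) (slice1_supp hs q) p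
    have h2 : (∫ t, |f (t, q)| * |deriv (fun t => f (t, q)) t|)
        = ∫ t, |f (t, q)| * |D1 f (t, q)| := by
      apply integral_congr_ae
      filter_upwards with t
      rw [slice1_deriv hf]
    have h3 : (∫ t, |f (t, q)| * |D1 f (t, q)|) ≤ Real.sqrt A * Real.sqrt B :=
      cs_s1 ((slice1_contDiff hf q).continuous.memLp_of_hasCompactSupport (slice1_supp hs q))
        ((slice1_contDiff hD1c q).continuous.memLp_of_hasCompactSupport (slice1_supp hD1s q))
    calc f (p, q) ^ 2 ≤ 2 * ∫ t, |f (t, q)| * |deriv (fun t => f (t, q)) t| := h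
      _ = 2 * ∫ t, |f (t, q)| * |D1 f (t, q)| := by rw [h2]
      _ ≤ 2 * (Real.sqrt A * Real.sqrt B) := by linarith [h3]
  have hAle : A ≤ 2 * (l2 f * l2 (D2 f)) := slice_bound hf hs q
  have hBle : B ≤ 2 * (l2 (D1 f) * l2 (D1 (D2 f))) := by
    have := slice_bound hD1c hD1s q
    rw [d12_symm hf]
    exact this
  have hl2f : 0 ≤ l2 f := Real.sqrt_nonneg _
  have hl21 : 0 ≤ l2 (D1 f) := Real.sqrt_nonneg _
  have hl22 : 0 ≤ l2 (D2 f) := Real.sqrt_nonneg _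
  have hl212 : 0 ≤ l2 (D1 (D2 f)) := Real.sqrt_nonneg _
  have hsA : Real.sqrt A ≤ Real.sqrt 2 * (Real.sqrt (l2 f) * Real.sqrt (l2 (D2 f))) := by
    calc Real.sqrt A ≤ Real.sqrt (2 * (l2 f * l2 (D2 f))) := Real.sqrt_le_sqrt hAle
      _ = Real.sqrt 2 * (Real.sqrt (l2 f) * Real.sqrt (l2 (D2 f))) := by
          rw [Real.sqrt_mul (by norm_num), Real.sqrt_mul hl2f]
  have hsB : Real.sqrt B ≤ Real.sqrt 2 * (Real.sqrt (l2 (D1 f)) * Real.sqrt (l2 (D1 (D2 f)))) := by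
    calc Real.sqrt B ≤ Real.sqrt (2 * (l2 (D1 f) * l2 (D1 (D2 f)))) := Real.sqrt_le_sqrt hBle
      _ = Real.sqrt 2 * (Real.sqrt (l2 (D1 f)) * Real.sqrt (l2 (D1 (D2 f)))) := by
          rw [Real.sqrt_mul (by norm_num), Real.sqrt_mul hl21]
  have hmul : Real.sqrt A * Real.sqrt B ≤ 2 * (u * v) := by
    have := mul_le_mul hsA hsB (Real.sqrt_nonneg _) (by positivity)
    calc Real.sqrt A * Real.sqrt B
        ≤ (Real.sqrt 2 * (Real.sqrt (l2 f) * Real.sqrt (l2 (D2 f)))) *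
          (Real.sqrt 2 * (Real.sqrt (l2 (D1 f)) * Real.sqrt (l2 (D1 (D2 f))))) := this
      _ = (Real.sqrt 2 * Real.sqrt 2) * (u * v) := by rw [hu, hv]; ring
      _ = 2 * (u * v) := by rw [Real.mul_self_sqrt (by norm_num)]
  have hsq : f (p, q) ^ 2 ≤ 4 * (u * v) := by linarith
  have habs : |f (p, q)| ^ 2 ≤ 4 * (u * v) := by rwa [sq_abs]
  have : |f (p, q)| ≤ u + v := by
    nlinarith [abs_nonneg (f (p, q)), sq_nonneg (u - v), sq_nonneg (u + v)]
  linarith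

end AnisoIneq
end
end
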